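/- arXiv:math/0603597 — 2 statements merged into one kernel-verified Lean document; each statement's English description precedes it below -/
import Mathlib

section
/- Let Ω ⊆ ℝ^m be open, s > 1, let (f_ε)_{ε∈(0,1)} be an s-regular net of smooth functions on Ω, and let (a_γ)_{γ∈ℤ₊^m} be complex numbers such that for every h > 0 there exists c > 0 with |a_γ| ≤ c·h^{|γ|}/(γ!)^s for all γ. Then for every compact K ⊆ Ω there exist C > 0, k > 0 and ε₀ ∈ (0,1) such that for every multi-index α, every x ∈ K and every ε ≤ ε₀ the series Σ_γ a_γ·(−i)^{|γ|}·∂^{α+γ} f_ε(x) converges absolutely and |Σ_γ a_γ·(−i)^{|γ|}·∂^{α+γ} f_ε(x)| ≤ C^{|α|+1}·(α!)^s·exp(k·ε^{−1/(2s-1)}). In particular the net (P(D)f_ε)_ε, where P(D) = Σ_γ a_γ D^γ with D^γ = (−i)^{|γ|}∂^γ, is s-regular. -/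
open MeasureTheory Pointwise

noncomputable def pd (m : ℕ) (j : Fin m) (f : (Fin m → ℝ) → ℂ) : (Fin m → ℝ) → ℂ :=
  fun x => fderiv ℝ f x (Pi.single j 1)

/-- Iterated partial derivative `∂^α` associated with a multi-index `α ∈ ℤ₊^m`. -/
noncomputable def pdm (m : ℕ) (α : Fin m → ℕ) (f : (Fin m → ℝ) → ℂ) : (Fin m → ℝ) → ℂ :=
  (List.finRange m).foldr (fun j g => (pd m j)^[α j] g) f

/-- `|α| = α₁ + ⋯ + α_m` for a multi-index. -/
def msize {m : ℕ} (α : Fin m → ℕ) : ℕ := ∑ i, α i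

/-- `α! = α₁! ⋯ α_m!` for a multi-index. -/
def mfact {m : ℕ} (α : Fin m → ℕ) : ℕ := ∏ i, Nat.factorial (α i)

/-- Euclidean norm on `ℝ^m` realized as `Fin m → ℝ`. -/
noncomputable def eunorm {m : ℕ} (x : Fin m → ℝ) : ℝ := Real.sqrt (∑ i, (x i) ^ 2)

/-- A net `(f_ε)` of smooth functions is `s`-regular on `Ω`. -/
def IsRegularNet (m : ℕ) (s : ℝ) (Ω : Set (Fin m → ℝ)) (f : ℝ → (Fin m → ℝ) → ℂ) : Prop :=
  ∀ K : Set (Fin m → ℝ), K ⊆ Ω → IsCompact K →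
    ∃ C > (0:ℝ), ∃ k > (0:ℝ), ∃ ε₀ ∈ Set.Ioo (0:ℝ) 1,
      ∀ α : Fin m → ℕ, ∀ x ∈ K, ∀ ε ∈ Set.Ioo (0:ℝ) 1, ε ≤ ε₀ →
        ‖pdm m α (f ε) x‖ ≤
          C ^ (msize α + 1) * (mfact α : ℝ) ^ s * Real.exp (k * ε ^ (-1 / (2 * s - 1)))

/-
The proof rests on `(β + γ)! ≤ 2^(|β| + |γ|) β! γ!`. Taking `h = (2 · 2^s · C)⁻¹` in the bound
on `a_γ`, where `C` is the regularity constant of `(f_ε)` on a compact neighbourhood of `K`, the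
`γ`-th term of `∂^β P(D) f_ε` is at most `c C (2^s C)^|β| (β!)^s e^(k ε^(-1/(2s-1))) · 2^(-|γ|)`
there. The series therefore converges absolutely with an `s`-regular bound of constant
`max (2^s C) (c C ∑_γ 2^(-|γ|))`, and, the bounds being uniform on a neighbourhood of each point of
`K`, it may be differentiated termwise, so that `∂^α P(D) f_ε = ∑_γ a_γ (-i)^|γ| ∂^(α+γ) f_ε`.
-/

-- Along lists of directions, reordering is a chain of adjacent swaps, so `∂^α ∂^γ = ∂^(α+γ)`
-- follows from the symmetry of second derivatives by induction on permutations.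
noncomputable def pdList (m : ℕ) (l : List (Fin m)) (F : (Fin m → ℝ) → ℂ) : (Fin m → ℝ) → ℂ :=
  l.foldr (pd m) F

def mlist {m : ℕ} (α : Fin m → ℕ) : List (Fin m) :=
  (List.finRange m).flatMap fun j => List.replicate (α j) j

section PartialDerivatives

variable {m : ℕ} {Ω : Set (Fin m → ℝ)} {F G : (Fin m → ℝ) → ℂ}

lemma pdList_cons (j : Fin m) (l : List (Fin m)) (F : (Fin m → ℝ) → ℂ) :
    pdList m (j :: l) F = pd m j (pdList m l F) := rfl

lemma pdList_append (l₁ l₂ : List (Fin m)) (F : (Fin m → ℝ) → ℂ) :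
    pdList m (l₁ ++ l₂) F = pdList m l₁ (pdList m l₂ F) :=
  List.foldr_append

lemma pdList_replicate (n : ℕ) (j : Fin m) (F : (Fin m → ℝ) → ℂ) :
    pdList m (List.replicate n j) F = (pd m j)^[n] F := by
  induction n with
  | zero => rfl
  | succ n ih => rw [List.replicate_succ, pdList_cons, ih, Function.iterate_succ_apply']

lemma pdm_eq_pdList_mlist (α : Fin m → ℕ) (F : (Fin m → ℝ) → ℂ) :
    pdm m α F = pdList m (mlist α) F := by
  unfold pdm mlist
  induction List.finRange m with
  | nil => rfl
  | cons j t ih => rw [List.foldr_cons, ih, List.flatMap_cons, pdList_append, pdList_replicate]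

lemma count_mlist (α : Fin m → ℕ) (j : Fin m) : (mlist α).count j = α j := by
  simp only [mlist, List.count_flatMap, Function.comp_def, List.count_replicate, beq_iff_eq,
    ← Fin.sum_univ_def, Finset.sum_ite_eq', Finset.mem_univ, if_true]

lemma pd_smul (c : ℂ) (j : Fin m) (F : (Fin m → ℝ) → ℂ) : pd m j (c • F) = c • pd m j F := by
  ext x
  simp [pd, fderiv_const_smul_field]

lemma pdList_smul (c : ℂ) (l : List (Fin m)) (F : (Fin m → ℝ) → ℂ) :
    pdList m l (c • F) = c • pdList m l F := by
  induction l with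
  | nil => rfl
  | cons j t ih => rw [pdList_cons, pdList_cons, ih, pd_smul]

lemma pdm_smul (c : ℂ) (α : Fin m → ℕ) (F : (Fin m → ℝ) → ℂ) :
    pdm m α (c • F) = c • pdm m α F := by
  simp only [pdm_eq_pdList_mlist, pdList_smul]

lemma pd_congr {U : Set (Fin m → ℝ)} (hU : IsOpen U) (h : Set.EqOn F G U) (j : Fin m) :
    Set.EqOn (pd m j F) (pd m j G) U := fun x hx => by
  simp only [pd, (h.eventuallyEq_of_mem (hU.mem_nhds hx)).fderiv_eq]

lemma pd_contDiffOn (hΩ : IsOpen Ω) (hF : ContDiffOn ℝ (⊤ : ℕ∞) F Ω) (j : Fin m) :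
    ContDiffOn ℝ (⊤ : ℕ∞) (pd m j F) Ω :=
  (hF.fderiv_of_isOpen hΩ (by exact_mod_cast le_top)).clm_apply contDiffOn_const

lemma pdList_contDiffOn (hΩ : IsOpen Ω) (hF : ContDiffOn ℝ (⊤ : ℕ∞) F Ω) (l : List (Fin m)) :
    ContDiffOn ℝ (⊤ : ℕ∞) (pdList m l F) Ω := by
  induction l with
  | nil => exact hF
  | cons j t ih => exact pd_contDiffOn hΩ ih j

lemma pdm_contDiffOn (hΩ : IsOpen Ω) (hF : ContDiffOn ℝ (⊤ : ℕ∞) F Ω) (α : Fin m → ℕ) :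
    ContDiffOn ℝ (⊤ : ℕ∞) (pdm m α F) Ω := by
  rw [pdm_eq_pdList_mlist]
  exact pdList_contDiffOn hΩ hF _

lemma pd_pd_comm (hΩ : IsOpen Ω) (hF : ContDiffOn ℝ (⊤ : ℕ∞) F Ω) (i j : Fin m) :
    Set.EqOn (pd m i (pd m j F)) (pd m j (pd m i F)) Ω := by
  intro x hx
  have hFx : ContDiffAt ℝ (⊤ : ℕ∞) F x := hF.contDiffAt (hΩ.mem_nhds hx)
  have hsymm : IsSymmSndFDerivAt ℝ F x :=
    hFx.isSymmSndFDerivAt (by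
      simp only [minSmoothness_of_isRCLikeNormedField]; exact WithTop.coe_le_coe.mpr le_top)
  have hd : DifferentiableAt ℝ (fderiv ℝ F) x :=
    (hFx.fderiv_right (m := 1) (WithTop.coe_le_coe.mpr le_top)).differentiableAt one_ne_zero
  have hpd : ∀ i j, pd m i (pd m j F) x = fderiv ℝ (fderiv ℝ F) x (Pi.single i 1) (Pi.single j 1) :=
    fun i j => by
      change fderiv ℝ (fun y => fderiv ℝ F y (Pi.single j 1)) x (Pi.single i 1) = _
      simp [fderiv_clm_apply hd (differentiableAt_const _)]
  rw [hpd, hpd, hsymm]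

lemma pdList_eqOn_of_perm (hΩ : IsOpen Ω) (hF : ContDiffOn ℝ (⊤ : ℕ∞) F Ω)
    {l₁ l₂ : List (Fin m)} (hp : l₁.Perm l₂) : Set.EqOn (pdList m l₁ F) (pdList m l₂ F) Ω := by
  induction hp with
  | nil => exact Set.eqOn_refl _ _
  | cons j _ ih => exact pd_congr hΩ ih j
  | swap i j l => exact pd_pd_comm hΩ (pdList_contDiffOn hΩ hF l) j i
  | trans _ _ ih₁ ih₂ => exact ih₁.trans ih₂

lemma pdList_eqOn_pdm (hΩ : IsOpen Ω) (hF : ContDiffOn ℝ (⊤ : ℕ∞) F Ω) (l : List (Fin m)) :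
    Set.EqOn (pdList m l F) (pdm m (fun j => l.count j) F) Ω := by
  rw [pdm_eq_pdList_mlist]
  exact pdList_eqOn_of_perm hΩ hF (List.perm_iff_count.2 fun j => (count_mlist (fun j => l.count j) j).symm)

lemma pdm_pdm (hΩ : IsOpen Ω) (hF : ContDiffOn ℝ (⊤ : ℕ∞) F Ω) (α γ : Fin m → ℕ) :
    Set.EqOn (pdm m α (pdm m γ F)) (pdm m (α + γ) F) Ω := by
  have hcount : (fun j => (mlist α ++ mlist γ).count j) = α + γ := by
    ext j
    simp [count_mlist]
  rw [pdm_eq_pdList_mlist α, pdm_eq_pdList_mlist γ, ← pdList_append, ← hcount]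
  exact pdList_eqOn_pdm hΩ hF _

end PartialDerivatives

lemma ContinuousLinearMap.opNorm_le_sum_norm_apply_single {𝕜 ι E : Type*}
    [NontriviallyNormedField 𝕜] [Fintype ι] [DecidableEq ι] [NormedAddCommGroup E]
    [NormedSpace 𝕜 E] (L : (ι → 𝕜) →L[𝕜] E) :
    ‖L‖ ≤ ∑ i, ‖L (Pi.single i 1)‖ := by
  refine L.opNorm_le_bound (Finset.sum_nonneg fun i _ => norm_nonneg _) fun v => ?_
  have hLv : L v = ∑ i, v i • L (Pi.single i 1) := by
    conv_lhs => rw [pi_eq_sum_univ' v]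
    simp [map_sum, map_smul]
  calc ‖L v‖ ≤ ∑ i, ‖v i • L (Pi.single i 1)‖ := hLv ▸ norm_sum_le _ _
    _ ≤ ∑ i, ‖L (Pi.single i 1)‖ * ‖v‖ := Finset.sum_le_sum fun i _ => by
        rw [norm_smul, mul_comm]
        exact mul_le_mul_of_nonneg_left (norm_le_pi_norm v i) (norm_nonneg _)
    _ = (∑ i, ‖L (Pi.single i 1)‖) * ‖v‖ := (Finset.sum_mul ..).symm

section TermwiseDifferentiation

variable {m : ℕ} {ι : Type*} {U : Set (Fin m → ℝ)} {G : ι → (Fin m → ℝ) → ℂ}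

lemma pd_tsum (hU : IsOpen U) (hUc : IsPreconnected U) (hG : ∀ γ, DifferentiableOn ℝ (G γ) U)
    (hG₀ : ∀ y ∈ U, Summable fun γ => G γ y) {u : Fin m → ι → ℝ} (hu : ∀ i, Summable (u i))
    (hbound : ∀ i γ, ∀ y ∈ U, ‖pd m i (G γ) y‖ ≤ u i γ) (j : Fin m) :
    Set.EqOn (pd m j fun y => ∑' γ, G γ y) (fun y => ∑' γ, pd m j (G γ) y) U := by
  intro y hy
  have hu' : Summable fun γ => ∑ i, u i γ := summable_sum fun i _ => hu i
  have hbound' : ∀ γ, ∀ z ∈ U, ‖fderiv ℝ (G γ) z‖ ≤ ∑ i, u i γ := fun γ z hz =>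
    (ContinuousLinearMap.opNorm_le_sum_norm_apply_single _).trans
      (Finset.sum_le_sum fun i _ => hbound i γ z hz)
  have hder := hasFDerivAt_tsum_of_isPreconnected hu' hU hUc
    (fun γ z hz => ((hG γ).differentiableAt (hU.mem_nhds hz)).hasFDerivAt) hbound' hy
    (hG₀ y hy) hy
  change fderiv ℝ _ y (Pi.single j 1) = ∑' γ, fderiv ℝ (G γ) y (Pi.single j 1)
  rw [hder.fderiv]
  exact (ContinuousLinearMap.apply ℝ ℂ (Pi.single j 1)).map_tsum
    (hu'.of_norm_bounded fun γ => hbound' γ y hy)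

lemma pdm_tsum (hU : IsOpen U) (hUc : IsPreconnected U) (hG : ∀ γ, ContDiffOn ℝ (⊤ : ℕ∞) (G γ) U)
    {u : (Fin m → ℕ) → ι → ℝ} (hu : ∀ β, Summable (u β))
    (hbound : ∀ β γ, ∀ y ∈ U, ‖pdm m β (G γ) y‖ ≤ u β γ) (α : Fin m → ℕ) :
    Set.EqOn (pdm m α fun y => ∑' γ, G γ y) (fun y => ∑' γ, pdm m α (G γ) y) U := by
  have hlist : ∀ l : List (Fin m), ∀ γ, ∀ y ∈ U,
      ‖pdList m l (G γ) y‖ ≤ u (fun j => l.count j) γ := fun l γ y hy =>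
    pdList_eqOn_pdm hU (hG γ) l hy ▸ hbound _ γ y hy
  have key : ∀ l : List (Fin m),
      Set.EqOn (pdList m l fun y => ∑' γ, G γ y) (fun y => ∑' γ, pdList m l (G γ) y) U := by
    intro l
    induction l with
    | nil => exact Set.eqOn_refl _ _
    | cons j t ih =>
      refine (pd_congr hU ih j).trans (pd_tsum hU hUc
        (fun γ => (pdList_contDiffOn hU (hG γ) t).differentiableOn (by simp))
        (fun y hy => (hu _).of_norm_bounded fun γ => hlist t γ y hy)
        (fun _ => hu _) (fun i γ y hy => hlist (i :: t) γ y hy) j)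
  intro y hy
  simp only [pdm_eq_pdList_mlist]
  exact key _ hy

end TermwiseDifferentiation

section MultiIndexEstimates

variable {m : ℕ}

lemma msize_add (α γ : Fin m → ℕ) : msize (α + γ) = msize α + msize γ :=
  Finset.sum_add_distrib

lemma mfact_pos (α : Fin m → ℕ) : 0 < mfact α :=
  Finset.prod_pos fun _ _ => Nat.factorial_pos _

lemma Nat.factorial_add_le_two_pow_mul (a b : ℕ) :
    (a + b).factorial ≤ 2 ^ (a + b) * (a.factorial * b.factorial) := by
  rw [← Nat.add_choose_mul_factorial_mul_factorial, mul_assoc]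
  exact Nat.mul_le_mul_right _ (Nat.choose_le_two_pow _ _)

lemma mfact_add_le (α γ : Fin m → ℕ) :
    mfact (α + γ) ≤ 2 ^ (msize α + msize γ) * (mfact α * mfact γ) := by
  rw [← msize_add, msize, mfact, mfact, mfact, ← Finset.prod_mul_distrib,
    ← Finset.prod_pow_eq_pow_sum, ← Finset.prod_mul_distrib]
  exact Finset.prod_le_prod' fun i _ => Nat.factorial_add_le_two_pow_mul (α i) (γ i)

lemma mfact_add_rpow_le {s : ℝ} (hs : 0 ≤ s) (α γ : Fin m → ℕ) :
    (mfact (α + γ) : ℝ) ^ s ≤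
      (2 ^ s) ^ (msize α + msize γ) * ((mfact α : ℝ) ^ s * (mfact γ : ℝ) ^ s) := by
  have hle : (mfact (α + γ) : ℝ) ≤ 2 ^ (msize α + msize γ) * ((mfact α : ℝ) * mfact γ) := by
    exact_mod_cast mfact_add_le α γ
  calc (mfact (α + γ) : ℝ) ^ s ≤ (2 ^ (msize α + msize γ) * ((mfact α : ℝ) * mfact γ)) ^ s :=
        Real.rpow_le_rpow (Nat.cast_nonneg _) hle hs
    _ = _ := by
        rw [Real.mul_rpow (by positivity) (by positivity), Real.mul_rpow (by positivity)
          (by positivity), Real.rpow_pow_comm zero_le_two]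

lemma summable_pow_msize {r : ℝ} (hr₀ : 0 ≤ r) (hr₁ : r < 1) :
    Summable fun γ : Fin m → ℕ => r ^ msize γ := by
  induction m with
  | zero => exact .of_finite
  | succ n ih =>
    have hcons : ∀ p : ℕ × (Fin n → ℕ),
        r ^ msize (Fin.consEquiv (fun _ => ℕ) p) = r ^ p.1 * r ^ msize p.2 := fun p => by
      rw [← pow_add]
      congr 1
      exact Fin.sum_univ_succ (Fin.cons p.1 p.2 : Fin (n + 1) → ℕ)
    rw [← (Fin.consEquiv fun _ => ℕ).summable_iff, Function.comp_def]
    exact ((summable_geometric_of_lt_one hr₀ hr₁).mul_of_nonneg ih (fun _ => by positivity)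
      (fun _ => by positivity)).congr fun p => (hcons p).symm

end MultiIndexEstimates

noncomputable def ultradiffOp {m : ℕ} (a : (Fin m → ℕ) → ℂ) (F : (Fin m → ℝ) → ℂ) :
    (Fin m → ℝ) → ℂ :=
  fun x => ∑' γ, a γ * (-Complex.I) ^ msize γ * pdm m γ F x

section UltradifferentialOperators

variable {m : ℕ}

lemma pdm_ultradiffOp_eqOn {U : Set (Fin m → ℝ)} (hU : IsOpen U) (hUc : IsPreconnected U)
    {F : (Fin m → ℝ) → ℂ} (hF : ContDiffOn ℝ (⊤ : ℕ∞) F U) {a : (Fin m → ℕ) → ℂ}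
    {u : (Fin m → ℕ) → (Fin m → ℕ) → ℝ} (hu : ∀ β, Summable (u β))
    (hbound : ∀ β γ, ∀ y ∈ U, ‖a γ * (-Complex.I) ^ msize γ * pdm m (β + γ) F y‖ ≤ u β γ)
    (α : Fin m → ℕ) :
    Set.EqOn (pdm m α (ultradiffOp a F))
      (fun y => ∑' γ, a γ * (-Complex.I) ^ msize γ * pdm m (α + γ) F y) U := by
  have hpdm : ∀ β γ, Set.EqOn (pdm m β ((a γ * (-Complex.I) ^ msize γ) • pdm m γ F))
      (fun y => a γ * (-Complex.I) ^ msize γ * pdm m (β + γ) F y) U := fun β γ y hy => by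
    rw [pdm_smul, Pi.smul_apply, smul_eq_mul, pdm_pdm hU hF β γ hy]
  have hswap := pdm_tsum hU hUc (G := fun γ => (a γ * (-Complex.I) ^ msize γ) • pdm m γ F)
    (fun γ => contDiffOn_const.smul (pdm_contDiffOn hU hF γ)) hu
    (fun β γ y hy => hpdm β γ hy ▸ hbound β γ y hy) α
  exact fun y hy => (hswap hy).trans (tsum_congr fun γ => hpdm α γ hy)

lemma norm_coeff_mul_le {s C c E : ℝ} (hs : 0 ≤ s) (hC : 0 < C) (hc : 0 ≤ c) (hE : 0 ≤ E)
    {β γ : Fin m → ℕ} {a z : ℂ}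
    (ha : ‖a‖ ≤ c * (2 * 2 ^ s * C)⁻¹ ^ msize γ / (mfact γ : ℝ) ^ s)
    (hz : ‖z‖ ≤ C ^ (msize (β + γ) + 1) * (mfact (β + γ) : ℝ) ^ s * E) :
    ‖a * (-Complex.I) ^ msize γ * z‖ ≤
      c * C * (2 ^ s * C) ^ msize β * (mfact β : ℝ) ^ s * E * 2⁻¹ ^ msize γ := by
  have hγ : 0 < (mfact γ : ℝ) ^ s := Real.rpow_pos_of_pos (by exact_mod_cast mfact_pos γ) s
  calc ‖a * (-Complex.I) ^ msize γ * z‖ = ‖a‖ * ‖z‖ := by simp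
    _ ≤ c * (2 * 2 ^ s * C)⁻¹ ^ msize γ / (mfact γ : ℝ) ^ s *
        (C ^ (msize (β + γ) + 1) * (mfact (β + γ) : ℝ) ^ s * E) :=
      mul_le_mul ha hz (norm_nonneg _) ((norm_nonneg _).trans ha)
    _ ≤ c * (2 * 2 ^ s * C)⁻¹ ^ msize γ / (mfact γ : ℝ) ^ s *
        (C ^ (msize β + msize γ + 1) *
          ((2 ^ s) ^ (msize β + msize γ) * ((mfact β : ℝ) ^ s * (mfact γ : ℝ) ^ s)) * E) := by
      rw [msize_add]
      gcongr
      exact mfact_add_rpow_le hs β γ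
    _ = _ := by
      rw [inv_pow, mul_pow, mul_pow, inv_pow]
      field_simp
      ring

end UltradifferentialOperators

lemma IsRegularNet.exists_bound_pdm_ultradiffOp {m : ℕ} {s : ℝ} (hs : 0 ≤ s)
    {Ω : Set (Fin m → ℝ)} (hΩ : IsOpen Ω) {f : ℝ → (Fin m → ℝ) → ℂ}
    (hfsm : ∀ ε ∈ Set.Ioo (0:ℝ) 1, ContDiffOn ℝ (⊤ : ℕ∞) (f ε) Ω) (hf : IsRegularNet m s Ω f)
    {a : (Fin m → ℕ) → ℂ}
    (ha : ∀ h > (0:ℝ), ∃ c > (0:ℝ), ∀ γ : Fin m → ℕ,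
      ‖a γ‖ ≤ c * h ^ (msize γ) / (mfact γ : ℝ) ^ s)
    {K : Set (Fin m → ℝ)} (hKΩ : K ⊆ Ω) (hK : IsCompact K) :
    ∃ C > (0:ℝ), ∃ k > (0:ℝ), ∃ ε₀ ∈ Set.Ioo (0:ℝ) 1,
      ∀ α : Fin m → ℕ, ∀ x ∈ K, ∀ ε ∈ Set.Ioo (0:ℝ) 1, ε ≤ ε₀ →
        (Summable fun γ : Fin m → ℕ =>
          ‖a γ * (-Complex.I) ^ (msize γ) * pdm m (α + γ) (f ε) x‖) ∧
        ‖∑' γ : Fin m → ℕ, a γ * (-Complex.I) ^ (msize γ) * pdm m (α + γ) (f ε) x‖ ≤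
          C ^ (msize α + 1) * (mfact α : ℝ) ^ s * Real.exp (k * ε ^ (-1 / (2 * s - 1))) ∧
        pdm m α (ultradiffOp a (f ε)) x =
          ∑' γ : Fin m → ℕ, a γ * (-Complex.I) ^ (msize γ) * pdm m (α + γ) (f ε) x := by
  obtain ⟨δ, hδ, hKδ⟩ := hK.exists_cthickening_subset_open hΩ hKΩ
  obtain ⟨C, hC, k, hk, ε₀, hε₀, hbd⟩ := hf _ hKδ hK.cthickening
  obtain ⟨c, hc, hac⟩ := ha (2 * 2 ^ s * C)⁻¹ (by positivity)
  have hgeo : Summable fun γ : Fin m → ℕ => (2⁻¹ : ℝ) ^ msize γ :=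
    summable_pow_msize (by norm_num) (by norm_num)
  set S := ∑' γ : Fin m → ℕ, (2⁻¹ : ℝ) ^ msize γ
  have hS : 0 ≤ S := tsum_nonneg fun _ => by positivity
  set C' := max (2 ^ s * C) (c * C * S)
  refine ⟨C', lt_max_of_lt_left (by positivity), k, hk, ε₀, hε₀, fun α x hx ε hε hεε => ?_⟩
  set E := Real.exp (k * ε ^ (-1 / (2 * s - 1)))
  set u : (Fin m → ℕ) → (Fin m → ℕ) → ℝ :=
    fun β γ => c * C * (2 ^ s * C) ^ msize β * (mfact β : ℝ) ^ s * E * 2⁻¹ ^ msize γ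
  have hu : ∀ β, Summable (u β) := fun β => hgeo.mul_left _
  have hterm : ∀ β γ, ∀ y ∈ Metric.cthickening δ K,
      ‖a γ * (-Complex.I) ^ msize γ * pdm m (β + γ) (f ε) y‖ ≤ u β γ := fun β γ y hy =>
    norm_coeff_mul_le hs hC hc.le (Real.exp_pos _).le (hac γ) (hbd _ y hy ε hε hεε)
  have hball : Metric.ball x δ ⊆ Metric.cthickening δ K :=
    (Metric.ball_subset_thickening hx δ).trans (Metric.thickening_subset_cthickening δ K)
  have hxδ : x ∈ Metric.cthickening δ K := Metric.self_subset_cthickening K hx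
  refine ⟨(hu α).of_nonneg_of_le (fun _ => norm_nonneg _) fun γ => hterm α γ x hxδ, ?_,
    pdm_ultradiffOp_eqOn Metric.isOpen_ball (convex_ball x δ).isPreconnected
      ((hfsm ε hε).mono (hball.trans hKδ)) hu (fun β γ y hy => hterm β γ y (hball hy)) α
      (Metric.mem_ball_self hδ)⟩
  calc ‖∑' γ, a γ * (-Complex.I) ^ msize γ * pdm m (α + γ) (f ε) x‖ ≤ ∑' γ, u α γ :=
        tsum_of_norm_bounded (hu α).hasSum fun γ => hterm α γ x hxδ
    _ = c * C * S * (2 ^ s * C) ^ msize α * ((mfact α : ℝ) ^ s * E) := by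
        rw [tsum_mul_left]
        ring
    _ ≤ C' * C' ^ msize α * ((mfact α : ℝ) ^ s * E) := by
        gcongr
        · exact le_max_right _ _
        · exact le_max_left _ _
    _ = C' ^ (msize α + 1) * (mfact α : ℝ) ^ s * E := by ring

theorem ultradifferential_preserves_regular_general
    (m : ℕ) (s : ℝ) (hs : 1 < s)
    (Ω : Set (Fin m → ℝ)) (hΩ : IsOpen Ω)
    (f : ℝ → (Fin m → ℝ) → ℂ)
    (hfsm : ∀ ε ∈ Set.Ioo (0:ℝ) 1, ContDiffOn ℝ (⊤ : ℕ∞) (f ε) Ω)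
    (hf : IsRegularNet m s Ω f)
    (a : (Fin m → ℕ) → ℂ)
    (ha : ∀ h > (0:ℝ), ∃ c > (0:ℝ), ∀ γ : Fin m → ℕ,
      ‖a γ‖ ≤ c * h ^ (msize γ) / (mfact γ : ℝ) ^ s) :
    (∀ K : Set (Fin m → ℝ), K ⊆ Ω → IsCompact K →
      ∃ C > (0:ℝ), ∃ k > (0:ℝ), ∃ ε₀ ∈ Set.Ioo (0:ℝ) 1,
        ∀ α : Fin m → ℕ, ∀ x ∈ K, ∀ ε ∈ Set.Ioo (0:ℝ) 1, ε ≤ ε₀ →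
          (Summable fun γ : Fin m → ℕ =>
            ‖a γ * (-Complex.I) ^ (msize γ) * pdm m (α + γ) (f ε) x‖) ∧
          ‖∑' γ : Fin m → ℕ,
              a γ * (-Complex.I) ^ (msize γ) * pdm m (α + γ) (f ε) x‖ ≤
            C ^ (msize α + 1) * (mfact α : ℝ) ^ s * Real.exp (k * ε ^ (-1 / (2 * s - 1)))) ∧
    IsRegularNet m s Ω (fun ε x =>
      ∑' γ : Fin m → ℕ, a γ * (-Complex.I) ^ (msize γ) * pdm m γ (f ε) x) := by
  have key := fun K (hKΩ : K ⊆ Ω) (hK : IsCompact K) =>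
    hf.exists_bound_pdm_ultradiffOp (by linarith) hΩ hfsm ha hKΩ hK
  constructor
  · intro K hKΩ hK
    obtain ⟨C, hC, k, hk, ε₀, hε₀, H⟩ := key K hKΩ hK
    exact ⟨C, hC, k, hk, ε₀, hε₀, fun α x hx ε hε hεε =>
      ⟨(H α x hx ε hε hεε).1, (H α x hx ε hε hεε).2.1⟩⟩
  · intro K hKΩ hK
    obtain ⟨C, hC, k, hk, ε₀, hε₀, H⟩ := key K hKΩ hK
    refine ⟨C, hC, k, hk, ε₀, hε₀, fun α x hx ε hε hεε => ?_⟩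
    obtain ⟨-, hle, heq⟩ := H α x hx ε hε hεε
    exact heq ▸ hle

/-- an s-ultradifferential operator `P(D) = Σ_γ a_γ D^γ` maps s-regular
nets to s-regular nets, with absolutely convergent series and uniform bounds. -/
theorem ultradifferential_preserves_regular
    (m : ℕ) (hm : 0 < m) (s : ℝ) (hs : 1 < s)
    (Ω : Set (Fin m → ℝ)) (hΩ : IsOpen Ω)
    (f : ℝ → (Fin m → ℝ) → ℂ)
    (hfsm : ∀ ε ∈ Set.Ioo (0:ℝ) 1, ContDiffOn ℝ (⊤ : ℕ∞) (f ε) Ω)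
    (hf : IsRegularNet m s Ω f)
    (a : (Fin m → ℕ) → ℂ)
    (ha : ∀ h > (0:ℝ), ∃ c > (0:ℝ), ∀ γ : Fin m → ℕ,
      ‖a γ‖ ≤ c * h ^ (msize γ) / (mfact γ : ℝ) ^ s) :
    (∀ K : Set (Fin m → ℝ), K ⊆ Ω → IsCompact K →
      ∃ C > (0:ℝ), ∃ k > (0:ℝ), ∃ ε₀ ∈ Set.Ioo (0:ℝ) 1,
        ∀ α : Fin m → ℕ, ∀ x ∈ K, ∀ ε ∈ Set.Ioo (0:ℝ) 1, ε ≤ ε₀ →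
          (Summable fun γ : Fin m → ℕ =>
            ‖a γ * (-Complex.I) ^ (msize γ) * pdm m (α + γ) (f ε) x‖) ∧
          ‖∑' γ : Fin m → ℕ,
              a γ * (-Complex.I) ^ (msize γ) * pdm m (α + γ) (f ε) x‖ ≤
            C ^ (msize α + 1) * (mfact α : ℝ) ^ s * Real.exp (k * ε ^ (-1 / (2 * s - 1)))) ∧
    IsRegularNet m s Ω (fun ε x =>
      ∑' γ : Fin m → ℕ, a γ * (-Complex.I) ^ (msize γ) * pdm m γ (f ε) x) :=
  ultradifferential_preserves_regular_general m s hs Ω hΩ f hfsm hf a ha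
end

section
/- Let s > 1 and let (f_ε)_{ε∈(0,1)} be a net of smooth compactly supported functions on ℝ^m such that for some C₁ > 0, k₁ > 0, k₂ > 0 and ε₀ ∈ (0,1): |f̂_ε(ξ)| ≤ C₁·exp(k₁·ε^{−1/(2s-1)} − k₂·|ξ|^{1/s}) for all ξ ∈ ℝ^m and all ε ≤ ε₀. Then there exists C > 0 such that |∂^α f_ε(x)| ≤ C^{|α|+1}·(α!)^s·exp(k₁·ε^{−1/(2s-1)}) for all multi-indices α, all x ∈ ℝ^m and all ε ≤ ε₀. -/
open MeasureTheory Pointwise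

/-- Fourier transform `f̂(ξ) = ∫ e^{-i⟨x,ξ⟩} f(x) dx`. -/
noncomputable def FT (m : ℕ) (f : (Fin m → ℝ) → ℂ) (ξ : Fin m → ℝ) : ℂ :=
  ∫ x : Fin m → ℝ, Complex.exp (-(Complex.I * ((∑ i, x i * ξ i : ℝ) : ℂ))) * f x

/-!
Since `∂^α` becomes multiplication by `(iξ)^α` under the Fourier transform, the hypothesis gives
`|(∂^α f_ε)^(ξ)| ≤ C₁ e^{k₁ε^{-1/(2s-1)}} |ξ|^{|α|} e^{-k₂|ξ|^{1/s}}`. The elementary bound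
`u^M e^{-k u^{1/s}} ≤ (M! (s/k)^M)^s`, applied with `M = |α| + m + 1`, turns this into a multiple of
the integrable weight `(1 + |ξ|)^{-(m+1)}`, and Fourier inversion bounds `sup |∂^α f_ε|` by the
integral of `|(∂^α f_ε)^|`. Finally `(|α| + m + 1)! ≤ 2^{|α|+m+1} (m+1)! m^{|α|} α!` (a binomial
and a multinomial coefficient bound) brings the constant to the form `C^{|α|+1} (α!)^s`.
-/
open FourierTransform Real
open scoped Nat

/-- With `t = u^{1/s}` the left side is `(t^M e^{-(k/s)t})^s`, and `t^M e^{-(k/s)t} ≤ M! (s/k)^M`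
because `((k/s)t)^M / M!` is a term of the exponential series. -/
lemma pow_mul_exp_neg_mul_rpow_le {s k u : ℝ} (hs : 0 < s) (hk : 0 < k) (hu : 0 ≤ u) (M : ℕ) :
    u ^ M * exp (-(k * u ^ (1 / s))) ≤ (M ! * (s / k) ^ M) ^ s := by
  set t := u ^ (1 / s)
  set c := k / s
  have ht : 0 ≤ t := rpow_nonneg hu _
  have hcs : c * s = k := div_mul_cancel₀ k hs.ne'
  have hcore : (c * t) ^ M * exp (-(c * t)) ≤ M ! := by
    have h := pow_div_factorial_le_exp (c * t) (by positivity) M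
    rw [div_le_iff₀ (by positivity)] at h
    calc (c * t) ^ M * exp (-(c * t)) ≤ exp (c * t) * M ! * exp (-(c * t)) := by gcongr
      _ = M ! := by rw [mul_right_comm, ← exp_add, add_neg_cancel, exp_zero, one_mul]
  have hinner : t ^ M * exp (-(c * t)) ≤ M ! * (s / k) ^ M :=
    calc t ^ M * exp (-(c * t)) = (c * (s / k)) ^ M * t ^ M * exp (-(c * t)) := by
          rw [show c * (s / k) = 1 by rw [← mul_div_assoc, hcs, div_self hk.ne'], one_pow, one_mul]
      _ = (c * t) ^ M * exp (-(c * t)) * (s / k) ^ M := by ring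
      _ ≤ M ! * (s / k) ^ M := by gcongr
  have hsplit : u ^ M * exp (-(k * t)) = (t ^ M * exp (-(c * t))) ^ s := by
    rw [mul_rpow (by positivity) (exp_nonneg _), ← rpow_pow_comm ht, ← rpow_mul hu,
      one_div_mul_cancel hs.ne', rpow_one, ← exp_mul, ← hcs]
    ring_nf
  rw [hsplit]
  gcongr

/-- Subadditivity of `r ↦ r^{1/s}` trades `r` for `1 + r` in the exponent at the cost of `e^k`. -/
lemma pow_mul_exp_neg_mul_rpow_le_mul_one_add_rpow_neg {s k r : ℝ} (hs : 1 ≤ s) (hk : 0 < k)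
    (hr : 0 ≤ r) (N n : ℕ) :
    r ^ N * exp (-(k * r ^ (1 / s))) ≤
      exp k * ((N + n)! * (s / k) ^ (N + n)) ^ s * (1 + r) ^ (-(n : ℝ)) := by
  have hsub : (1 + r) ^ (1 / s) ≤ 1 + r ^ (1 / s) := by
    simpa using rpow_add_le_add_rpow zero_le_one hr (by positivity)
      (div_le_one_of_le₀ hs (by positivity))
  rw [rpow_neg (by positivity), rpow_natCast, ← div_eq_mul_inv, le_div_iff₀ (by positivity)]
  calc r ^ N * exp (-(k * r ^ (1 / s))) * (1 + r) ^ n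
      ≤ (1 + r) ^ N * (exp k * exp (-(k * (1 + r) ^ (1 / s)))) * (1 + r) ^ n := by
        rw [← exp_add]
        gcongr
        · linarith
        · nlinarith
    _ = exp k * ((1 + r) ^ (N + n) * exp (-(k * (1 + r) ^ (1 / s)))) := by ring
    _ ≤ exp k * ((N + n)! * (s / k) ^ (N + n)) ^ s := by
        gcongr
        exact pow_mul_exp_neg_mul_rpow_le (by linarith) hk (by positivity) _

lemma mul_pow_le_max_pow_succ {a b : ℝ} (hb : 0 ≤ b) (N : ℕ) :
    a * b ^ N ≤ max (max a b) 1 ^ (N + 1) := by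
  rw [pow_succ']
  exact mul_le_mul ((le_max_left a b).trans (le_max_left _ 1))
    (pow_le_pow_left₀ hb ((le_max_right a b).trans (le_max_left _ 1)) N) (pow_nonneg hb N)
    (by positivity)

lemma Nat.multinomial_univ_le_card_pow {ι : Type*} [Fintype ι] [DecidableEq ι] (f : ι → ℕ) :
    Nat.multinomial Finset.univ f ≤ Fintype.card ι ^ ∑ i, f i := by
  have h :=
    Finset.sum_pow_eq_sum_piAntidiag (Finset.univ : Finset ι) (fun _ => (1 : ℕ)) (∑ i, f i)
  simp only [Finset.sum_const, smul_eq_mul, mul_one, one_pow, Finset.prod_const_one,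
    Finset.card_univ] at h
  rw [h]
  exact Finset.single_le_sum (f := fun g => Nat.multinomial Finset.univ g)
    (fun _ _ => Nat.zero_le _) (by simp)

lemma Nat.factorial_add_le (a b : ℕ) : (a + b)! ≤ 2 ^ (a + b) * (a ! * b !) := by
  rw [← Nat.add_choose_mul_factorial_mul_factorial, mul_assoc]
  exact Nat.mul_le_mul_right _ (Nat.choose_le_two_pow _ _)

lemma factorial_msize_le {m : ℕ} (α : Fin m → ℕ) : (msize α)! ≤ m ^ msize α * mfact α := by
  rw [msize, mfact, ← Nat.multinomial_spec, mul_comm]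
  simpa using Nat.mul_le_mul_right _ (Nat.multinomial_univ_le_card_pow α)

lemma factorial_msize_add_mul_pow_le {m : ℕ} (α : Fin m → ℕ) (n : ℕ) {c : ℝ} (hc : 0 ≤ c) :
    ((msize α + n)! : ℝ) * c ^ (msize α + n) ≤
      (2 * c) ^ n * n ! * ((2 * m * c) ^ msize α * mfact α) := by
  have h : (msize α + n)! ≤ 2 ^ (msize α + n) * (m ^ msize α * mfact α * n !) :=
    (Nat.factorial_add_le _ _).trans (by gcongr; exact factorial_msize_le α)
  calc ((msize α + n)! : ℝ) * c ^ (msize α + n)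
      ≤ 2 ^ (msize α + n) * (m ^ msize α * mfact α * n !) * c ^ (msize α + n) := by
        gcongr; exact_mod_cast h
    _ = (2 * c) ^ n * n ! * ((2 * m * c) ^ msize α * mfact α) := by ring

theorem norm_le_integral_norm_fourier {V : Type*} [NormedAddCommGroup V] [InnerProductSpace ℝ V]
    [FiniteDimensional ℝ V] [MeasurableSpace V] [BorelSpace V] {f : V → ℂ} (hf : Continuous f)
    (hi : Integrable f) (hFi : Integrable (𝓕 f)) (v : V) :
    ‖f v‖ ≤ ∫ w, ‖𝓕 f w‖ :=
  calc ‖f v‖ = ‖𝓕 (𝓕 f) (-v)‖ := by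
        rw [← fourierInv_eq_fourier_neg, hf.fourierInv_fourier_eq hi hFi]
    _ ≤ ∫ w, ‖𝓕 f w‖ := VectorFourier.norm_fourierIntegral_le_integral_norm _ _ _ _ _

lemma List.foldr_iterate_induction {ι α : Type*} {p : α → Prop} {f : ι → α → α}
    (hf : ∀ j a, p a → p (f j a)) (n : ι → ℕ) (l : List ι) {a : α} (ha : p a) :
    p (l.foldr (fun j b => (f j)^[n j] b) a) := by
  induction l with
  | nil => exact ha
  | cons j l ih => exact Function.Iterate.rec p ih (hf j) (n j)

section EuclideanFourier

variable {m : ℕ} {g : (Fin m → ℝ) → ℂ}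

lemma eunorm_nonneg (x : Fin m → ℝ) : 0 ≤ eunorm x := Real.sqrt_nonneg _

lemma abs_le_eunorm (x : Fin m → ℝ) (j : Fin m) : |x j| ≤ eunorm x := by
  rw [← Real.sqrt_sq_eq_abs, eunorm]
  exact Real.sqrt_le_sqrt
    (Finset.single_le_sum (f := fun i => x i ^ 2) (fun i _ => sq_nonneg (x i)) (Finset.mem_univ j))

lemma eunorm_smul (c : ℝ) (x : Fin m → ℝ) : eunorm (c • x) = |c| * eunorm x := by
  simp only [eunorm, Pi.smul_apply, smul_eq_mul, mul_pow, ← Finset.mul_sum]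
  rw [Real.sqrt_mul (sq_nonneg c), Real.sqrt_sq_eq_abs]

lemma eunorm_ofLp (w : EuclideanSpace ℝ (Fin m)) : eunorm w.ofLp = ‖w‖ := by
  simp [eunorm, EuclideanSpace.norm_eq]

lemma norm_prod_I_mul_pow_le (α : Fin m → ℕ) (ξ : Fin m → ℝ) :
    ‖∏ j, (Complex.I * ξ j) ^ α j‖ ≤ eunorm ξ ^ msize α := by
  rw [msize, ← Finset.prod_pow_eq_pow_sum, norm_prod]
  gcongr with j
  rw [norm_pow, norm_mul, Complex.norm_I, one_mul, Complex.norm_real, Real.norm_eq_abs]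
  gcongr
  exact abs_le_eunorm ξ j

open Complex in
lemma hasFDerivAt_exp_neg_I_mul_sum (ξ x : Fin m → ℝ) :
    HasFDerivAt (fun x : Fin m → ℝ => exp (-(I * ((∑ i, x i * ξ i : ℝ) : ℂ))))
      (exp (-(I * ((∑ i, x i * ξ i : ℝ) : ℂ))) •
        (-I) • ofRealCLM.comp (∑ i, ξ i • ContinuousLinearMap.proj i)) x := by
  set L : (Fin m → ℝ) →L[ℝ] ℂ := (-I) • ofRealCLM.comp (∑ i, ξ i • ContinuousLinearMap.proj i)
  have hL : ∀ x, -(I * ((∑ i, x i * ξ i : ℝ) : ℂ)) = L x := fun x => by simp [L, mul_comm]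
  simp only [hL]
  exact L.hasFDerivAt.cexp

open Complex in
/-- Integration by parts against the kernel `e^{-i⟨x,ξ⟩}`, whose `j`-th partial derivative is
`-iξⱼ e^{-i⟨x,ξ⟩}`. -/
lemma FT_pd (hg : ContDiff ℝ 1 g) (hcs : HasCompactSupport g) (j : Fin m) (ξ : Fin m → ℝ) :
    FT m (pd m j g) ξ = I * ξ j * FT m g ξ := by
  set e : (Fin m → ℝ) → ℂ := fun x => exp (-(I * ((∑ i, x i * ξ i : ℝ) : ℂ)))
  have he : Continuous e := by fun_prop
  have hde : ∀ x, fderiv ℝ e x (Pi.single j 1) = -(I * ξ j) * e x := fun x => by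
    rw [(hasFDerivAt_exp_neg_I_mul_sum ξ x).fderiv]
    simp [e, Pi.single_apply]
    ring
  have hdg : Continuous fun x => fderiv ℝ g x (Pi.single j 1) :=
    (hg.continuous_fderiv one_ne_zero).clm_apply continuous_const
  have hcs' : HasCompactSupport fun x => fderiv ℝ g x (Pi.single j 1) :=
    (hcs.fderiv ℝ).comp_left (g := fun L : (Fin m → ℝ) →L[ℝ] ℂ => L (Pi.single j 1)) rfl
  change ∫ x, e x * fderiv ℝ g x (Pi.single j 1) = I * ξ j * ∫ x, e x * g x
  rw [integral_mul_fderiv_eq_neg_fderiv_mul_of_integrable, ← integral_const_mul, ← integral_neg]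
  · simp only [hde]
    congr 1 with x
    ring
  · simp only [hde]
    exact ((continuous_const.mul he).mul hg.continuous).integrable_of_hasCompactSupport
      hcs.mul_left
  · exact (he.mul hdg).integrable_of_hasCompactSupport hcs'.mul_left
  · exact (he.mul hg.continuous).integrable_of_hasCompactSupport hcs.mul_left
  · exact fun x _ => (hasFDerivAt_exp_neg_I_mul_sum ξ x).differentiableAt
  · exact fun x _ => hg.differentiable one_ne_zero x

lemma contDiff_pd (hg : ContDiff ℝ (⊤ : ℕ∞) g) (j : Fin m) :
    ContDiff ℝ (⊤ : ℕ∞) (pd m j g) :=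
  (hg.fderiv_right (m := (⊤ : ℕ∞)) le_rfl).clm_apply contDiff_const

lemma hasCompactSupport_pd (hg : HasCompactSupport g) (j : Fin m) :
    HasCompactSupport (pd m j g) :=
  (hg.fderiv ℝ).comp_left (g := fun L : (Fin m → ℝ) →L[ℝ] ℂ => L (Pi.single j 1)) rfl

lemma contDiff_pdm (hg : ContDiff ℝ (⊤ : ℕ∞) g) (α : Fin m → ℕ) :
    ContDiff ℝ (⊤ : ℕ∞) (pdm m α g) :=
  List.foldr_iterate_induction (p := fun h => ContDiff ℝ (⊤ : ℕ∞) h)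
    (fun j _ h => contDiff_pd h j) α _ hg

lemma hasCompactSupport_pdm (hg : HasCompactSupport g) (α : Fin m → ℕ) :
    HasCompactSupport (pdm m α g) :=
  List.foldr_iterate_induction (p := HasCompactSupport)
    (fun j _ h => hasCompactSupport_pd h j) α _ hg

lemma FT_iterate_pd (hg : ContDiff ℝ (⊤ : ℕ∞) g) (hcs : HasCompactSupport g) (j : Fin m)
    (n : ℕ) (ξ : Fin m → ℝ) :
    FT m ((pd m j)^[n] g) ξ = (Complex.I * ξ j) ^ n * FT m g ξ := by
  induction n generalizing g with
  | zero => simp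
  | succ n ih =>
    rw [Function.iterate_succ_apply, ih (contDiff_pd hg j) (hasCompactSupport_pd hcs j),
      FT_pd (hg.of_le (by simp)) hcs]
    ring

lemma FT_pdm (hg : ContDiff ℝ (⊤ : ℕ∞) g) (hcs : HasCompactSupport g) (α : Fin m → ℕ)
    (ξ : Fin m → ℝ) :
    FT m (pdm m α g) ξ = (∏ j, (Complex.I * ξ j) ^ α j) * FT m g ξ := by
  rw [pdm, Fin.prod_univ_def]
  induction List.finRange m with
  | nil => simp
  | cons j l ih =>
    rw [List.foldr_cons, FT_iterate_pd
      (List.foldr_iterate_induction (p := fun h => ContDiff ℝ (⊤ : ℕ∞) h)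
        (fun j _ h => contDiff_pd h j) α l hg)
      (List.foldr_iterate_induction (p := HasCompactSupport)
        (fun j _ h => hasCompactSupport_pd h j) α l hcs), ih,
      List.map_cons, List.prod_cons, mul_assoc]

/-- Mathlib's `𝓕` uses the kernel `e^{-2πi⟨v,w⟫}`, hence the rescaling by `2π`. -/
lemma fourier_comp_ofLp (g : (Fin m → ℝ) → ℂ) (w : EuclideanSpace ℝ (Fin m)) :
    𝓕 (fun v : EuclideanSpace ℝ (Fin m) => g v) w = FT m g ((2 * π) • w.ofLp) := by
  rw [fourier_eq, FT, ← (EuclideanSpace.volume_preserving_symm_measurableEquiv_toLp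
    (Fin m)).integral_comp']
  congr 1 with v
  rw [Circle.smul_def, fourierChar_apply, smul_eq_mul, PiLp.inner_apply]
  simp only [RCLike.inner_apply, conj_trivial]
  congr 2
  push_cast
  simp only [Finset.mul_sum, Finset.sum_mul, ← Finset.sum_neg_distrib]
  congr 1 with i
  simp only [Pi.smul_apply, smul_eq_mul, MeasurableEquiv.coe_toLp_symm]
  push_cast
  ring

lemma norm_le_of_norm_FT_le (hg : Continuous g) (hcs : HasCompactSupport g) {r : ℝ} (hr : m < r)
    {B : ℝ} (hB : ∀ ξ, ‖FT m g ξ‖ ≤ B * (1 + eunorm ξ) ^ (-r)) (x : Fin m → ℝ) :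
    ‖g x‖ ≤ B * ∫ w : EuclideanSpace ℝ (Fin m), (1 + ‖w‖) ^ (-r) := by
  set g' : EuclideanSpace ℝ (Fin m) → ℂ := fun v => g v
  have hg' : Continuous g' := hg.comp (PiLp.continuous_ofLp 2 _)
  have hi : Integrable g' := hg'.integrable_of_hasCompactSupport
    (hcs.comp_homeomorph (PiLp.homeomorph 2 _))
  have hB0 : 0 ≤ B := nonneg_of_mul_nonneg_left ((norm_nonneg _).trans (hB 0))
    (Real.rpow_pos_of_pos (add_pos_of_pos_of_nonneg one_pos (eunorm_nonneg 0)) _)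
  have hmaj : Integrable fun w : EuclideanSpace ℝ (Fin m) => B * (1 + ‖w‖) ^ (-r) :=
    (integrable_one_add_norm (by rwa [finrank_euclideanSpace_fin])).const_mul B
  have hbound : ∀ w, ‖𝓕 g' w‖ ≤ B * (1 + ‖w‖) ^ (-r) := fun w => by
    refine (fourier_comp_ofLp g w ▸ hB _).trans ?_
    rw [eunorm_smul, eunorm_ofLp, abs_of_pos two_pi_pos]
    gcongr B * ?_
    have hr0 : 0 ≤ r := (Nat.cast_nonneg m).trans hr.le
    exact Real.rpow_le_rpow_of_nonpos (by positivity) (by nlinarith [norm_nonneg w, two_le_pi])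
      (neg_nonpos.2 hr0)
  have hFi : Integrable (𝓕 g') := hmaj.mono'
    (VectorFourier.fourierIntegral_continuous continuous_fourierChar
      (innerSL ℝ).continuous₂ hi).aestronglyMeasurable (ae_of_all _ hbound)
  calc ‖g x‖ = ‖g' (WithLp.toLp 2 x)‖ := rfl
    _ ≤ ∫ w, ‖𝓕 g' w‖ := norm_le_integral_norm_fourier hg' hi hFi _
    _ ≤ ∫ w, B * (1 + ‖w‖) ^ (-r) := integral_mono hFi.norm hmaj hbound
    _ = B * ∫ w : EuclideanSpace ℝ (Fin m), (1 + ‖w‖) ^ (-r) := integral_const_mul B _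

lemma norm_FT_pdm_le (hg : ContDiff ℝ (⊤ : ℕ∞) g) (hcs : HasCompactSupport g) {s k K : ℝ}
    (hs : 1 ≤ s) (hk : 0 < k) (hdecay : ∀ ξ, ‖FT m g ξ‖ ≤ K * exp (-(k * eunorm ξ ^ (1 / s))))
    (α : Fin m → ℕ) (n : ℕ) (ξ : Fin m → ℝ) :
    ‖FT m (pdm m α g) ξ‖ ≤ K * exp k * ((msize α + n)! * (s / k) ^ (msize α + n)) ^ s *
      (1 + eunorm ξ) ^ (-(n : ℝ)) := by
  have hK : 0 ≤ K := nonneg_of_mul_nonneg_left ((norm_nonneg _).trans (hdecay 0)) (exp_pos _)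
  rw [FT_pdm hg hcs, norm_mul]
  calc ‖∏ j, (Complex.I * ξ j) ^ α j‖ * ‖FT m g ξ‖
      ≤ eunorm ξ ^ msize α * (K * exp (-(k * eunorm ξ ^ (1 / s)))) :=
        mul_le_mul (norm_prod_I_mul_pow_le α ξ) (hdecay ξ) (norm_nonneg _)
          (pow_nonneg (eunorm_nonneg ξ) _)
    _ = K * (eunorm ξ ^ msize α * exp (-(k * eunorm ξ ^ (1 / s)))) := by ring
    _ ≤ K * (exp k * ((msize α + n)! * (s / k) ^ (msize α + n)) ^ s *
          (1 + eunorm ξ) ^ (-(n : ℝ))) := mul_le_mul_of_nonneg_left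
        (pow_mul_exp_neg_mul_rpow_le_mul_one_add_rpow_neg hs hk (eunorm_nonneg ξ) _ n) hK
    _ = _ := by ring

end EuclideanFourier

theorem regular_of_fourier_decay_general (m : ℕ) (s : ℝ) (hs : 1 < s)
    (f : ℝ → (Fin m → ℝ) → ℂ)
    (hsm : ∀ ε ∈ Set.Ioo (0:ℝ) 1, ContDiff ℝ (⊤ : ℕ∞) (f ε))
    (hcs : ∀ ε ∈ Set.Ioo (0:ℝ) 1, HasCompactSupport (f ε))
    (C₁ k₁ k₂ : ℝ) (hC₁ : 0 < C₁) (hk₂ : 0 < k₂)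
    (ε₀ : ℝ)
    (hFT : ∀ ξ : Fin m → ℝ, ∀ ε ∈ Set.Ioo (0:ℝ) 1, ε ≤ ε₀ →
      ‖FT m (f ε) ξ‖ ≤
        C₁ * Real.exp (k₁ * ε ^ (-1 / (2 * s - 1)) - k₂ * eunorm ξ ^ (1 / s))) :
    ∃ C > (0:ℝ), ∀ (α : Fin m → ℕ) (x : Fin m → ℝ), ∀ ε ∈ Set.Ioo (0:ℝ) 1, ε ≤ ε₀ →
      ‖pdm m α (f ε) x‖ ≤
        C ^ (msize α + 1) * (mfact α : ℝ) ^ s * Real.exp (k₁ * ε ^ (-1 / (2 * s - 1))) := by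
  set c := s / k₂
  set A := ∫ w : EuclideanSpace ℝ (Fin m), (1 + ‖w‖) ^ (-((m + 1 : ℕ) : ℝ))
  have hA : 0 ≤ A := integral_nonneg fun w => by positivity
  set P₀ := C₁ * exp k₂ * ((2 * c) ^ (m + 1) * (m + 1)!) ^ s * A
  set P₁ := (2 * m * c) ^ s
  refine ⟨max (max P₀ P₁) 1, by positivity, fun α x ε hε hεε₀ => ?_⟩
  set E := exp (k₁ * ε ^ (-1 / (2 * s - 1)))
  have hdecay : ∀ ξ, ‖FT m (f ε) ξ‖ ≤ C₁ * E * exp (-(k₂ * eunorm ξ ^ (1 / s))) := fun ξ => by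
    rw [mul_assoc, ← exp_add, ← sub_eq_add_neg]
    exact hFT ξ ε hε hεε₀
  have hfact := factorial_msize_add_mul_pow_le α (m + 1) (by positivity : 0 ≤ c)
  calc ‖pdm m α (f ε) x‖
      ≤ C₁ * E * exp k₂ * ((msize α + (m + 1))! * c ^ (msize α + (m + 1))) ^ s * A :=
        norm_le_of_norm_FT_le (contDiff_pdm (hsm ε hε) α).continuous
          (hasCompactSupport_pdm (hcs ε hε) α) (by push_cast; linarith)
          (norm_FT_pdm_le (hsm ε hε) (hcs ε hε) hs.le hk₂ hdecay α (m + 1)) x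
    _ ≤ C₁ * E * exp k₂ * ((2 * c) ^ (m + 1) * (m + 1)! * ((2 * m * c) ^ msize α * mfact α)) ^ s
          * A := by gcongr
    _ = P₀ * P₁ ^ msize α * (mfact α : ℝ) ^ s * E := by
        rw [mul_rpow (by positivity) (by positivity),
          mul_rpow (x := (2 * m * c) ^ msize α) (by positivity) (by positivity),
          ← rpow_pow_comm (by positivity)]
        simp only [P₀, P₁]
        ring
    _ ≤ max (max P₀ P₁) 1 ^ (msize α + 1) * (mfact α : ℝ) ^ s * E := by
        gcongr
        exact mul_pow_le_max_pow_succ (by positivity) _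

/-- conversely, exponential Fourier decay `exp(-k₂|ξ|^{1/s})` implies
uniform Gevrey-`s` bounds on all derivatives. -/
theorem regular_of_fourier_decay (m : ℕ) (hm : 0 < m) (s : ℝ) (hs : 1 < s)
    (f : ℝ → (Fin m → ℝ) → ℂ)
    (hsm : ∀ ε ∈ Set.Ioo (0:ℝ) 1, ContDiff ℝ (⊤ : ℕ∞) (f ε))
    (hcs : ∀ ε ∈ Set.Ioo (0:ℝ) 1, HasCompactSupport (f ε))
    (C₁ k₁ k₂ : ℝ) (hC₁ : 0 < C₁) (hk₁ : 0 < k₁) (hk₂ : 0 < k₂)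
    (ε₀ : ℝ) (hε₀ : ε₀ ∈ Set.Ioo (0:ℝ) 1)
    (hFT : ∀ ξ : Fin m → ℝ, ∀ ε ∈ Set.Ioo (0:ℝ) 1, ε ≤ ε₀ →
      ‖FT m (f ε) ξ‖ ≤
        C₁ * Real.exp (k₁ * ε ^ (-1 / (2 * s - 1)) - k₂ * eunorm ξ ^ (1 / s))) :
    ∃ C > (0:ℝ), ∀ (α : Fin m → ℕ) (x : Fin m → ℝ), ∀ ε ∈ Set.Ioo (0:ℝ) 1, ε ≤ ε₀ →
      ‖pdm m α (f ε) x‖ ≤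
        C ^ (msize α + 1) * (mfact α : ℝ) ^ s * Real.exp (k₁ * ε ^ (-1 / (2 * s - 1))) :=
  regular_of_fourier_decay_general m s hs f hsm hcs C₁ k₁ k₂ hC₁ hk₂ ε₀ hFT
end
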